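/- arXiv:1408.1310 — 2 statements merged into one kernel-verified Lean document; each statement's English description precedes it below -/
import Mathlib

section
/- Define g(x_{(ℓ)}) = Σ_{j=0}^{ℓ} M(x_j), h(x_{(ℓ)}) = c(β(s_ℓ)) where s_ℓ is the ending state of x_{(ℓ)} on the trellis of C, β projects to the supercode state, and c is the minimal backward completion cost on the supercode trellis. Then the evaluation function f = g + h is non-decreasing along any path of the trellis of C: f(x_{(ℓ)}) ≤ f(x_{(ℓ+1)}) whenever x_{(ℓ+1)} extends x_{(ℓ)} by one trellis branch. -/
/-- With `g(x_{(ℓ)}) = ∑_{j≤ℓ} M j (x j)`,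
`h(x_{(ℓ)}) = c ℓ (β (s ℓ))` where `s ℓ = ∑_{j≤ℓ} x j • h j` is the ending
state on the trellis of `C`, `β` projects onto the first `mbar` coordinates
(the supercode state), and `c ℓ sb` is the minimal backward completion cost on
the supercode trellis (expressed via `IsLeast` at the two states involved),
the evaluation function `f = g + h` is non-decreasing along any path:
`f(x_{(ℓ)}) ≤ f(x_{(ℓ+1)})`. -/
theorem evaluation_function_nondecreasing (n m mbar : ℕ) (hmb : mbar ≤ m)
    (hcol : ℕ → Fin m → ZMod 2)
    (y : ℕ → ZMod 2) (φ : ℕ → ℝ)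
    (M : ℕ → ZMod 2 → ℝ)
    (hM : ∀ j b, M j b = if y j = b then 0 else |φ j|)
    (β : (Fin m → ZMod 2) → (Fin mbar → ZMod 2))
    (hβ : ∀ s i, β s i = s (Fin.castLE hmb i))
    (x : ℕ → ZMod 2)
    (s : ℕ → Fin m → ZMod 2)
    (hs : ∀ ℓ, s ℓ = ∑ j ∈ Finset.range (ℓ + 1), x j • hcol j)
    (ℓ : ℕ) (hℓ : ℓ + 1 < n)
    (c : ℕ → (Fin mbar → ZMod 2) → ℝ)
    (hcℓ : IsLeast {r : ℝ | ∃ xs : ℕ → ZMod 2,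
        β (s ℓ) + ∑ j ∈ Finset.Ico (ℓ + 1) n,
          xs j • (fun i => hcol j (Fin.castLE hmb i)) = 0 ∧
        r = ∑ j ∈ Finset.Ico (ℓ + 1) n, M j (xs j)} (c ℓ (β (s ℓ))))
    (hcℓ₁ : IsLeast {r : ℝ | ∃ xs : ℕ → ZMod 2,
        β (s (ℓ + 1)) + ∑ j ∈ Finset.Ico (ℓ + 2) n,
          xs j • (fun i => hcol j (Fin.castLE hmb i)) = 0 ∧
        r = ∑ j ∈ Finset.Ico (ℓ + 2) n, M j (xs j)} (c (ℓ + 1) (β (s (ℓ + 1))))) :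
    (∑ j ∈ Finset.range (ℓ + 1), M j (x j)) + c ℓ (β (s ℓ)) ≤
      (∑ j ∈ Finset.range (ℓ + 2), M j (x j)) + c (ℓ + 1) (β (s (ℓ + 1))) := by
  obtain ⟨⟨xs', hxs'eq, hxs'val⟩, _⟩ := hcℓ₁
  obtain ⟨_, hlb⟩ := hcℓ
  set xs'' : ℕ → ZMod 2 := fun j => if j = ℓ + 1 then x (ℓ + 1) else xs' j with hxs''
  have hmem : c ℓ (β (s ℓ)) ≤ M (ℓ + 1) (x (ℓ + 1)) +
      ∑ j ∈ Finset.Ico (ℓ + 2) n, M j (xs' j) := by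
    apply hlb
    refine ⟨xs'', ?_, ?_⟩
    · rw [Finset.sum_eq_sum_Ico_succ_bot hℓ]
      have h1 : ∀ j ∈ Finset.Ico (ℓ + 2) n, xs'' j • (fun i => hcol j (Fin.castLE hmb i)) =
          xs' j • (fun i => hcol j (Fin.castLE hmb i)) := by
        intro j hj
        have : j ≠ ℓ + 1 := by
          have := (Finset.mem_Ico.mp hj).1; omega
        simp [hxs'', this]
      rw [Finset.sum_congr rfl h1]
      have h2 : β (s ℓ) + xs'' (ℓ + 1) • (fun i => hcol (ℓ + 1) (Fin.castLE hmb i)) =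
          β (s (ℓ + 1)) := by
        funext i
        simp only [Pi.add_apply, hβ, hs, Finset.sum_range_succ, Pi.smul_apply,
          smul_eq_mul, Finset.sum_apply, hxs'', if_pos rfl]
      rw [← add_assoc, h2, hxs'eq]
    · rw [Finset.sum_eq_sum_Ico_succ_bot hℓ]
      have h1 : ∀ j ∈ Finset.Ico (ℓ + 2) n, M j (xs'' j) = M j (xs' j) := by
        intro j hj
        have : j ≠ ℓ + 1 := by
          have := (Finset.mem_Ico.mp hj).1; omega
        simp [hxs'', this]
      rw [Finset.sum_congr rfl h1]
      simp [hxs'']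
  rw [show ℓ + 2 = (ℓ + 1) + 1 from rfl, Finset.sum_range_succ _ (ℓ + 1), hxs'val]
  linarith
end

section
/- The heuristic function h(x_{(ℓ)}) = c(β(s_ℓ)) is admissible: for every path x_{(ℓ)} on the trellis of C and every completion (x_{ℓ+1},…,x_{n−1}) of x_{(ℓ)} to a full codeword of C, h(x_{(ℓ)}) ≤ Σ_{j=ℓ+1}^{n−1} M(x_j). Hence f(x_{(ℓ)}) ≤ M(v) for every codeword v of C extending x_{(ℓ)}. -/
/-- admissibility: For every path `x_{(ℓ)}` on the trellis of `C`
and every completion `v` of it to a full codeword of `C` (i.e. `v` agrees with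
the path labels on positions `0..ℓ` and `∑_{j<n} v j • hcol j = 0`), the
heuristic `h(x_{(ℓ)}) = c ℓ (β (s ℓ))` — the minimal backward completion cost
on the supercode trellis, given via `IsLeast` — satisfies
`h(x_{(ℓ)}) ≤ ∑_{j=ℓ+1}^{n−1} M j (v j)`, and hence
`f(x_{(ℓ)}) = g(x_{(ℓ)}) + h(x_{(ℓ)}) ≤ M(v)`. -/
theorem heuristic_admissible (n m mbar : ℕ) (hmb : mbar ≤ m)
    (hcol : ℕ → Fin m → ZMod 2)
    (y : ℕ → ZMod 2) (φ : ℕ → ℝ)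
    (M : ℕ → ZMod 2 → ℝ)
    (hM : ∀ j b, M j b = if y j = b then 0 else |φ j|)
    (β : (Fin m → ZMod 2) → (Fin mbar → ZMod 2))
    (hβ : ∀ s i, β s i = s (Fin.castLE hmb i))
    (x : ℕ → ZMod 2) (ℓ : ℕ) (hℓ : ℓ + 1 ≤ n)
    (s : Fin m → ZMod 2)
    (hs : s = ∑ j ∈ Finset.range (ℓ + 1), x j • hcol j)
    (cval : ℝ)
    (hc : IsLeast {r : ℝ | ∃ xs : ℕ → ZMod 2,
        β s + ∑ j ∈ Finset.Ico (ℓ + 1) n,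
          xs j • (fun i => hcol j (Fin.castLE hmb i)) = 0 ∧
        r = ∑ j ∈ Finset.Ico (ℓ + 1) n, M j (xs j)} cval)
    (v : ℕ → ZMod 2)
    (hagree : ∀ j ≤ ℓ, v j = x j)
    (hvcode : ∑ j ∈ Finset.range n, v j • hcol j = 0) :
    cval ≤ ∑ j ∈ Finset.Ico (ℓ + 1) n, M j (v j) ∧
      (∑ j ∈ Finset.range (ℓ + 1), M j (x j)) + cval ≤
        ∑ j ∈ Finset.range n, M j (v j) := by
  have h1 : cval ≤ ∑ j ∈ Finset.Ico (ℓ + 1) n, M j (v j) := by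
    apply hc.2
    refine ⟨v, ?_, rfl⟩
    funext i
    have key : (∑ j ∈ Finset.range n, v j • hcol j) (Fin.castLE hmb i) = 0 := by
      rw [hvcode]; rfl
    rw [← Finset.sum_range_add_sum_Ico _ hℓ] at key
    simp only [Pi.add_apply, hβ, hs, Finset.sum_apply, Pi.smul_apply, Pi.zero_apply] at key ⊢
    rw [← key]
    congr 1
    exact Finset.sum_congr rfl fun j hj =>
      by rw [hagree j (Nat.lt_succ_iff.mp (Finset.mem_range.mp hj))]
  refine ⟨h1, ?_⟩
  have h2 : ∑ j ∈ Finset.range n, M j (v j) =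
      (∑ j ∈ Finset.range (ℓ + 1), M j (x j)) + ∑ j ∈ Finset.Ico (ℓ + 1) n, M j (v j) := by
    rw [← Finset.sum_range_add_sum_Ico _ hℓ]
    congr 1
    exact Finset.sum_congr rfl fun j hj =>
      by rw [hagree j (Nat.lt_succ_iff.mp (Finset.mem_range.mp hj))]
  rw [h2]
  linarith
end
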